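/- Let q : ℝ² → ℂ be a smooth solution of the NLS and E a frame of q with det E(x,t,λ) = 1 for all (x,t,λ). Let λ₀ ∈ ℝ, let α = (∂E/∂λ)·E⁻¹ evaluated at λ = λ₀, and define γ(x,t) = α(x - 2λ₀t, t). Then α takes values in su(2), ⟨γ_x,γ_x⟩ = 1 everywhere, and γ_t = (1/4)[γ_x, γ_xx]; that is, under the identification su(2) ≅ ℝ³, γ is a solution of the VFE parametrized by arc length. -/

import Mathlib

open Matrix Complex

noncomputable section

attribute [local instance] Matrix.normedAddCommGroup Matrix.normedSpace

/-- Partial derivative in the first (space) variable. -/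
def pdx {V : Type*} [NormedAddCommGroup V] [NormedSpace ℝ V] (f : ℝ → ℝ → V) : ℝ → ℝ → V :=
  fun x t => deriv (fun s => f s t) x

/-- Partial derivative in the second (time) variable. -/
def pdt {V : Type*} [NormedAddCommGroup V] [NormedSpace ℝ V] (f : ℝ → ℝ → V) : ℝ → ℝ → V :=
  fun x t => deriv (fun s => f x s) t

/-- Smoothness of a map of two real variables. -/
def Smooth2 {V : Type*} [NormedAddCommGroup V] [NormedSpace ℝ V] (f : ℝ → ℝ → V) : Prop :=
  ContDiff ℝ (⊤ : ℕ∞) (fun p : ℝ × ℝ => f p.1 p.2)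

/-- The focusing nonlinear Schrödinger equation `q_t = (i/2)(q_xx + 2|q|²q)`. -/
def IsSolNLS (q : ℝ → ℝ → ℂ) : Prop :=
  Smooth2 q ∧ ∀ x t, pdt q x t =
    (Complex.I / 2) * (pdx (pdx q) x t + 2 * (Complex.normSq (q x t) : ℂ) * q x t)

/-- `a = diag(i, -i)`. -/
def Ma : Matrix (Fin 2) (Fin 2) ℂ := !![Complex.I, 0; 0, -Complex.I]

/-- `b = [[0,1],[-1,0]]`. -/
def Mb : Matrix (Fin 2) (Fin 2) ℂ := !![0, 1; -1, 0]

/-- `c = [[0,i],[i,0]]`. -/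
def Mc : Matrix (Fin 2) (Fin 2) ℂ := !![0, Complex.I; Complex.I, 0]

/-- `u = [[0,q],[-q̄,0]]`. -/
def Mu (z : ℂ) : Matrix (Fin 2) (Fin 2) ℂ := !![0, z; -(starRingEnd ℂ z), 0]

/-- `Q₋₁(u) = (i/2)[[-|q|², q_x],[q̄_x, |q|²]]`, where `z = q` and `w = q_x`. -/
def Qm1 (z w : ℂ) : Matrix (Fin 2) (Fin 2) ℂ :=
  (Complex.I / 2) • !![-(Complex.normSq z : ℂ), w; starRingEnd ℂ w, (Complex.normSq z : ℂ)]

/-- A frame of a solution `q` of the NLS: smooth in `(x,t)`, holomorphic in `λ`,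
solving `E⁻¹E_x = aλ + u`, `E⁻¹E_t = aλ² + uλ + Q₋₁(u)`, and satisfying the
SU(2)-reality condition `E(x,t,λ̄)* E(x,t,λ) = I`. -/
structure IsFrame (q : ℝ → ℝ → ℂ) (E : ℝ → ℝ → ℂ → Matrix (Fin 2) (Fin 2) ℂ) : Prop where
  smooth : ContDiff ℝ (⊤ : ℕ∞) (fun p : ℝ × ℝ × ℂ => E p.1 p.2.1 p.2.2)
  holo : ∀ x t, Differentiable ℂ (E x t)
  lax_x : ∀ x t l, pdx (fun x t => E x t l) x t = E x t l * (l • Ma + Mu (q x t))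
  lax_t : ∀ x t l, pdt (fun x t => E x t l) x t =
      E x t l * ((l ^ 2) • Ma + l • Mu (q x t) + Qm1 (q x t) (pdx q x t))
  reality : ∀ x t l, (E x t (starRingEnd ℂ l))ᴴ * E x t l = 1

/-- Membership in `su(2)`. -/
def IsSU2alg (X : Matrix (Fin 2) (Fin 2) ℂ) : Prop := Xᴴ = -X ∧ X.trace = 0

/-- Membership in `SU(2)`. -/
def IsSU2 (A : Matrix (Fin 2) (Fin 2) ℂ) : Prop := Aᴴ * A = 1 ∧ A.det = 1

/-- The linear isometry `su(2) ≅ ℝ³` sending `a, -c, b` to the standard basis: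
an element `[[ix, y+iz],[-y+iz, -ix]] = x·a + y·b + z·c` goes to `(x, -z, y)`. -/
def toR3 (X : Matrix (Fin 2) (Fin 2) ℂ) : Fin 3 → ℝ := ![(X 0 0).im, -(X 0 1).im, (X 0 1).re]

/-- `Ad(φ)[δ]`: the 3×3 real matrix whose columns are `φaφ⁻¹, -φcφ⁻¹, φbφ⁻¹`
under the identification `su(2) ≅ ℝ³`. -/
def AdDelta (φ : Matrix (Fin 2) (Fin 2) ℂ) : Matrix (Fin 3) (Fin 3) ℝ :=
  Matrix.of fun j i => ![toR3 (φ * Ma * φ⁻¹), toR3 (-(φ * Mc * φ⁻¹)), toR3 (φ * Mb * φ⁻¹)] i j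

/-- The coefficient matrix of a parallel frame with principal curvatures `k₁, k₂`. -/
def K3 (k₁ k₂ : ℝ) : Matrix (Fin 3) (Fin 3) ℝ := !![0, -k₁, -k₂; k₁, 0, 0; k₂, 0, 0]

namespace S6

abbrev MM := Matrix (Fin 2) (Fin 2) ℂ

abbrev mmTop : TopologicalSpace MM :=
  (inferInstance : NormedAddCommGroup MM).toUniformSpace.toTopologicalSpace

attribute [local instance] mmTop

/-! ### Multiplication and conjugate-transpose as continuous (bi)linear maps -/

noncomputable def mulRL : MM →L[ℝ] MM →L[ℝ] MM :=
  LinearMap.toContinuousLinearMap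
    ((LinearMap.toContinuousLinearMap :
        (MM →ₗ[ℝ] MM) ≃ₗ[ℝ] (MM →L[ℝ] MM)).toLinearMap ∘ₗ LinearMap.mul ℝ MM)

@[simp] lemma mulRL_apply (A B : MM) : mulRL A B = A * B := by simp [mulRL]

noncomputable def mulCL : MM →L[ℂ] MM →L[ℂ] MM :=
  LinearMap.toContinuousLinearMap
    ((LinearMap.toContinuousLinearMap :
        (MM →ₗ[ℂ] MM) ≃ₗ[ℂ] (MM →L[ℂ] MM)).toLinearMap ∘ₗ LinearMap.mul ℂ MM)

@[simp] lemma mulCL_apply (A B : MM) : mulCL A B = A * B := by simp [mulCL]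

lemma _root_.HasDerivAt.mmul {f g : ℝ → MM} {f' g' : MM} {x : ℝ}
    (hf : HasDerivAt f f' x) (hg : HasDerivAt g g' x) :
    HasDerivAt (fun s => f s * g s) (f x * g' + f' * g x) x := by
  have h := (mulRL.isBoundedBilinearMap.hasFDerivAt (f x, g x)).comp_hasDerivAt x (hf.prodMk hg)
  simp only [IsBoundedBilinearMap.deriv_apply, mulRL_apply] at h
  exact h

lemma _root_.HasDerivAt.mmulC {f g : ℂ → MM} {f' g' : MM} {x : ℂ}
    (hf : HasDerivAt f f' x) (hg : HasDerivAt g g' x) :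
    HasDerivAt (fun s => f s * g s) (f x * g' + f' * g x) x := by
  have h := (mulCL.isBoundedBilinearMap.hasFDerivAt (f x, g x)).comp_hasDerivAt x (hf.prodMk hg)
  simp only [IsBoundedBilinearMap.deriv_apply, mulCL_apply] at h
  exact h

noncomputable def ctL : MM →L[ℝ] MM :=
  LinearMap.toContinuousLinearMap
    { toFun := fun A => Aᴴ
      map_add' := fun A B => Matrix.conjTranspose_add A B
      map_smul' := fun r A => by
        ext i j
        simp [Matrix.conjTranspose_apply, Matrix.smul_apply] }

@[simp] lemma ctL_apply (A : MM) : ctL A = Aᴴ := by simp [ctL]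

noncomputable def entryL (i j : Fin 2) : MM →L[ℂ] ℂ :=
  LinearMap.toContinuousLinearMap
    { toFun := fun A => A i j
      map_add' := fun A B => rfl
      map_smul' := fun r A => rfl }

@[simp] lemma entryL_apply (i j : Fin 2) (A : MM) : entryL i j A = A i j := by simp [entryL]; rfl

/-! ### Matrix algebra lemmas -/

lemma Ma_sq : Ma * Ma = -1 := by
  ext i j
  fin_cases i <;> fin_cases j <;>
    simp [Ma, Matrix.mul_apply, Fin.sum_univ_two]

lemma ct_Ma : Maᴴ = -Ma := by
  ext i j
  fin_cases i <;> fin_cases j <;> simp [Ma]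

lemma ct_Mu (z : ℂ) : (Mu z)ᴴ = -Mu z := by
  ext i j
  fin_cases i <;> fin_cases j <;> simp [Mu]

lemma ct_Qm1 (z w : ℂ) : (Qm1 z w)ᴴ = -Qm1 z w := by
  ext i j
  fin_cases i <;> fin_cases j <;>
    simp [Qm1, Matrix.conjTranspose_apply, Matrix.smul_apply, div_eq_mul_inv]

lemma ct_real_smul (r : ℝ) (A : MM) : ((r : ℂ) • A)ᴴ = (r : ℂ) • Aᴴ := by
  ext i j
  simp [Matrix.conjTranspose_apply, Matrix.smul_apply]

lemma real_smul_mat (r : ℝ) (A : MM) : r • A = (r : ℂ) • A := by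
  ext i j
  simp [Matrix.smul_apply, Complex.real_smul]

lemma key4 (l z : ℂ) :
    Ma * ((l • Ma + Mu z) * Ma - Ma * (l • Ma + Mu z)) -
      ((l • Ma + Mu z) * Ma - Ma * (l • Ma + Mu z)) * Ma = (4 : ℂ) • Mu z := by
  ext i j
  fin_cases i <;> fin_cases j <;>
    simp [Ma, Mu, Matrix.mul_apply, Fin.sum_univ_two, Matrix.smul_apply,
      Matrix.add_apply, Matrix.sub_apply] <;> ring_nf <;> simp [Complex.I_sq] <;> ring

end S6
namespace S6

attribute [local instance] mmTop

variable {q : ℝ → ℝ → ℂ} {E : ℝ → ℝ → ℂ → Matrix (Fin 2) (Fin 2) ℂ}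

def FF (E : ℝ → ℝ → ℂ → MM) : ℝ × ℝ × ℂ → MM := fun p => E p.1 p.2.1 p.2.2

noncomputable def DD (E : ℝ → ℝ → ℂ → MM) (x t : ℝ) (l : ℂ) : MM := deriv (E x t) l

def Cm (q : ℝ → ℝ → ℂ) (x t : ℝ) (l : ℂ) : MM := l • Ma + Mu (q x t)

def Tm (q : ℝ → ℝ → ℂ) (x t : ℝ) (l : ℂ) : MM :=
  l ^ 2 • Ma + l • Mu (q x t) + Qm1 (q x t) (pdx q x t)

/-! ### coordinate lines -/

lemma line1 {G : ℝ × ℝ × ℂ → MM} {x t : ℝ} {l : ℂ}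
    (hG : DifferentiableAt ℝ G (x, t, l)) :
    HasDerivAt (fun s => G (s, t, l)) (fderiv ℝ G (x, t, l) ((1:ℝ), (0:ℝ), (0:ℂ))) x := by
  have hline : HasDerivAt (fun s : ℝ => ((s, t, l) : ℝ × ℝ × ℂ)) ((1:ℝ), (0:ℝ), (0:ℂ)) x :=
    (hasDerivAt_id x).prodMk ((hasDerivAt_const x t).prodMk (hasDerivAt_const x l))
  exact hG.hasFDerivAt.comp_hasDerivAt x hline

lemma line2 {G : ℝ × ℝ × ℂ → MM} {x t : ℝ} {l : ℂ}
    (hG : DifferentiableAt ℝ G (x, t, l)) :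
    HasDerivAt (fun s => G (x, s, l)) (fderiv ℝ G (x, t, l) ((0:ℝ), (1:ℝ), (0:ℂ))) t := by
  have hline : HasDerivAt (fun s : ℝ => ((x, s, l) : ℝ × ℝ × ℂ)) ((0:ℝ), (1:ℝ), (0:ℂ)) t :=
    (hasDerivAt_const t x).prodMk ((hasDerivAt_id t).prodMk (hasDerivAt_const t l))
  exact hG.hasFDerivAt.comp_hasDerivAt t hline

lemma lineLambda {H : ℝ × ℝ × ℂ → MM} {x t : ℝ} {l : ℂ}
    (hH : DifferentiableAt ℝ H (x, t, l)) {Φ : ℂ → MM}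
    (heq : ∀ m : ℂ, H (x, t, m) = Φ m) {V : MM} (hV : HasDerivAt Φ V l) :
    fderiv ℝ H (x, t, l) ((0:ℝ), (0:ℝ), (1:ℂ)) = V := by
  have hι : HasFDerivAt (fun m : ℂ => ((x, t, m) : ℝ × ℝ × ℂ))
      ((0 : ℂ →L[ℝ] ℝ).prod ((0 : ℂ →L[ℝ] ℝ).prod (ContinuousLinearMap.id ℝ ℂ))) l :=
    (hasFDerivAt_const x l).prodMk ((hasFDerivAt_const t l).prodMk (hasFDerivAt_id l))
  have h1 := hH.hasFDerivAt.comp l hι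
  have hfun : (fun m : ℂ => H (x, t, m)) = Φ := funext heq
  simp only [Function.comp_def] at h1
  rw [hfun] at h1
  have h2 : HasFDerivAt Φ
      (((1 : ℂ →L[ℂ] ℂ).smulRight V).restrictScalars ℝ) l :=
    hV.hasFDerivAt.restrictScalars ℝ
  have h3 := h1.unique h2
  have h4 := congrArg (fun (L : ℂ →L[ℝ] MM) => L 1) h3
  simpa using h4

/-! ### consequences of the Lax equations -/

lemma fderiv_e1 (hE : IsFrame q E) (x t : ℝ) (l : ℂ) :
    fderiv ℝ (FF E) (x, t, l) ((1:ℝ), (0:ℝ), (0:ℂ)) = E x t l * Cm q x t l := by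
  have h := line1 (x := x) (t := t) (l := l)
    ((hE.smooth.differentiable (by simp)) (x, t, l))
  have h2 := hE.lax_x x t l
  simp only [pdx] at h2
  exact (h.deriv).symm.trans h2

lemma fderiv_e2 (hE : IsFrame q E) (x t : ℝ) (l : ℂ) :
    fderiv ℝ (FF E) (x, t, l) ((0:ℝ), (1:ℝ), (0:ℂ)) = E x t l * Tm q x t l := by
  have h := line2 (x := x) (t := t) (l := l)
    ((hE.smooth.differentiable (by simp)) (x, t, l))
  have h2 := hE.lax_t x t l
  simp only [pdt] at h2
  exact (h.deriv).symm.trans h2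

lemma hd_lam (hE : IsFrame q E) (x t : ℝ) (l : ℂ) :
    HasDerivAt (E x t) (DD E x t l) l :=
  (hE.holo x t l).hasDerivAt

lemma fderiv_e3 (hE : IsFrame q E) (x t : ℝ) (l : ℂ) :
    fderiv ℝ (FF E) (x, t, l) ((0:ℝ), (0:ℝ), (1:ℂ)) = DD E x t l :=
  lineLambda ((hE.smooth.differentiable (by simp)) (x, t, l)) (fun _ => rfl)
    (hd_lam hE x t l)

lemma hd_x (hE : IsFrame q E) (x t : ℝ) (l : ℂ) :
    HasDerivAt (fun s => E s t l) (E x t l * Cm q x t l) x := by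
  have h := line1 (G := FF E) (x := x) (t := t) (l := l)
    ((hE.smooth.differentiable (by simp)) (x, t, l))
  rwa [fderiv_e1 hE x t l] at h

lemma hd_t (hE : IsFrame q E) (x t : ℝ) (l : ℂ) :
    HasDerivAt (fun s => E x s l) (E x t l * Tm q x t l) t := by
  have h := line2 (G := FF E) (x := x) (t := t) (l := l)
    ((hE.smooth.differentiable (by simp)) (x, t, l))
  rwa [fderiv_e2 hE x t l] at h

/-! ### symmetry of second derivatives -/

lemma swap_sym {F : ℝ × ℝ × ℂ → MM} (hF : ContDiff ℝ (⊤ : ℕ∞) F) (p v w : ℝ × ℝ × ℂ) :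
    fderiv ℝ (fun r => fderiv ℝ F r w) p v = fderiv ℝ (fun r => fderiv ℝ F r v) p w := by
  have hF' : ContDiff ℝ (⊤ : ℕ∞) (fderiv ℝ F) := hF.fderiv_right (by simp)
  have hf'' : HasFDerivAt (fderiv ℝ F) (fderiv ℝ (fderiv ℝ F) p) p :=
    (hF'.differentiable (by simp) p).hasFDerivAt
  have h1 : fderiv ℝ (fun r => fderiv ℝ F r w) p =
      (ContinuousLinearMap.apply ℝ MM w).comp (fderiv ℝ (fderiv ℝ F) p) :=
    (((ContinuousLinearMap.apply ℝ MM w).hasFDerivAt).comp p hf'').fderiv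
  have h2 : fderiv ℝ (fun r => fderiv ℝ F r v) p =
      (ContinuousLinearMap.apply ℝ MM v).comp (fderiv ℝ (fderiv ℝ F) p) :=
    (((ContinuousLinearMap.apply ℝ MM v).hasFDerivAt).comp p hf'').fderiv
  have hsym := second_derivative_symmetric
    (fun y => (hF.differentiable (by simp) y).hasFDerivAt) hf'' v w
  rw [h1, h2]
  simpa using hsym

/-! ### the mixed-partial swap -/

lemma hd_Dx (hE : IsFrame q E) (x t : ℝ) (l : ℂ) :
    HasDerivAt (fun s => DD E s t l)
      (E x t l * Ma + DD E x t l * Cm q x t l) x := by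
  have hF := hE.smooth
  have hF' : ContDiff ℝ (⊤ : ℕ∞) (fderiv ℝ (FF E)) := hF.fderiv_right (by simp)
  have hGc : ContDiff ℝ (⊤ : ℕ∞) (fun r => fderiv ℝ (FF E) r ((0:ℝ), (0:ℝ), (1:ℂ))) :=
    (ContinuousLinearMap.apply ℝ MM ((0:ℝ), (0:ℝ), (1:ℂ))).contDiff.comp hF'
  have h0 : HasDerivAt (fun s => fderiv ℝ (FF E) (s, t, l) ((0:ℝ), (0:ℝ), (1:ℂ)))
      (fderiv ℝ (fun r => fderiv ℝ (FF E) r ((0:ℝ), (0:ℝ), (1:ℂ))) (x, t, l)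
        ((1:ℝ), (0:ℝ), (0:ℂ))) x :=
    line1 ((hGc.differentiable (by simp)) (x, t, l))
  have hR : fderiv ℝ (fun r => fderiv ℝ (FF E) r ((1:ℝ), (0:ℝ), (0:ℂ))) (x, t, l)
      ((0:ℝ), (0:ℝ), (1:ℂ)) = E x t l * Ma + DD E x t l * Cm q x t l := by
    apply lineLambda (Φ := fun m => E x t m * Cm q x t m)
    · exact (((ContinuousLinearMap.apply ℝ MM ((1:ℝ), (0:ℝ), (0:ℂ))).contDiff.comp
        hF').differentiable (by simp)) (x, t, l)
    · intro m; exact fderiv_e1 hE x t m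
    · have hCm : HasDerivAt (fun m : ℂ => Cm q x t m) Ma l := by
        simpa [Cm] using ((hasDerivAt_id l).smul_const Ma).add_const (Mu (q x t))
      exact (hd_lam hE x t l).mmulC hCm
  have hsym := swap_sym (F := FF E) hF (x, t, l) ((1:ℝ), (0:ℝ), (0:ℂ)) ((0:ℝ), (0:ℝ), (1:ℂ))
  rw [hsym, hR] at h0
  have hfun : (fun s => fderiv ℝ (FF E) (s, t, l) ((0:ℝ), (0:ℝ), (1:ℂ)))
      = fun s => DD E s t l := funext fun s => fderiv_e3 hE s t l
  rwa [hfun] at h0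

lemma hd_Dt (hE : IsFrame q E) (x t : ℝ) (l : ℂ) :
    HasDerivAt (fun s => DD E x s l)
      (E x t l * ((2 * l) • Ma + Mu (q x t)) + DD E x t l * Tm q x t l) t := by
  have hF := hE.smooth
  have hF' : ContDiff ℝ (⊤ : ℕ∞) (fderiv ℝ (FF E)) := hF.fderiv_right (by simp)
  have hGc : ContDiff ℝ (⊤ : ℕ∞) (fun r => fderiv ℝ (FF E) r ((0:ℝ), (0:ℝ), (1:ℂ))) :=
    (ContinuousLinearMap.apply ℝ MM ((0:ℝ), (0:ℝ), (1:ℂ))).contDiff.comp hF'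
  have h0 : HasDerivAt (fun s => fderiv ℝ (FF E) (x, s, l) ((0:ℝ), (0:ℝ), (1:ℂ)))
      (fderiv ℝ (fun r => fderiv ℝ (FF E) r ((0:ℝ), (0:ℝ), (1:ℂ))) (x, t, l)
        ((0:ℝ), (1:ℝ), (0:ℂ))) t :=
    line2 ((hGc.differentiable (by simp)) (x, t, l))
  have hR : fderiv ℝ (fun r => fderiv ℝ (FF E) r ((0:ℝ), (1:ℝ), (0:ℂ))) (x, t, l)
      ((0:ℝ), (0:ℝ), (1:ℂ)) = E x t l * ((2 * l) • Ma + Mu (q x t))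
        + DD E x t l * Tm q x t l := by
    apply lineLambda (Φ := fun m => E x t m * Tm q x t m)
    · exact (((ContinuousLinearMap.apply ℝ MM ((0:ℝ), (1:ℝ), (0:ℂ))).contDiff.comp
        hF').differentiable (by simp)) (x, t, l)
    · intro m; exact fderiv_e2 hE x t m
    · have hTm : HasDerivAt (fun m : ℂ => Tm q x t m) ((2 * l) • Ma + Mu (q x t)) l := by
        have h1 : HasDerivAt (fun m : ℂ => m ^ 2 • Ma) ((2 * l) • Ma) l := by
          simpa using (hasDerivAt_pow 2 l).smul_const Ma
        have h2 : HasDerivAt (fun m : ℂ => m • Mu (q x t)) (Mu (q x t)) l := by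
          simpa using (hasDerivAt_id l).smul_const (Mu (q x t))
        simpa [Tm] using (h1.add h2).add_const (Qm1 (q x t) (pdx q x t))
      exact (hd_lam hE x t l).mmulC hTm
  have hsym := swap_sym (F := FF E) hF (x, t, l) ((0:ℝ), (1:ℝ), (0:ℂ)) ((0:ℝ), (0:ℝ), (1:ℂ))
  rw [hsym, hR] at h0
  have hfun : (fun s => fderiv ℝ (FF E) (x, s, l) ((0:ℝ), (0:ℝ), (1:ℂ)))
      = fun s => DD E x s l := funext fun s => fderiv_e3 hE x s l
  rwa [hfun] at h0

end S6
namespace S6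

attribute [local instance] mmTop

variable {q : ℝ → ℝ → ℂ} {E : ℝ → ℝ → ℂ → Matrix (Fin 2) (Fin 2) ℂ}

lemma ct_Cm (r : ℝ) (x t : ℝ) : (Cm q x t (r : ℂ))ᴴ = -Cm q x t (r : ℂ) := by
  rw [Cm, Matrix.conjTranspose_add, ct_real_smul, ct_Ma, ct_Mu]
  simp only [smul_neg, neg_add]

lemma ct_Tm (r : ℝ) (x t : ℝ) : (Tm q x t (r : ℂ))ᴴ = -Tm q x t (r : ℂ) := by
  have h2 : ((r : ℂ) ^ 2 • Ma)ᴴ = -((r : ℂ) ^ 2 • Ma) := by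
    rw [show ((r : ℂ) ^ 2) = (((r ^ 2 : ℝ)) : ℂ) by push_cast; ring, ct_real_smul, ct_Ma]
    simp [smul_neg]
  rw [Tm, Matrix.conjTranspose_add, Matrix.conjTranspose_add, h2, ct_real_smul, ct_Mu,
    ct_Qm1]
  simp only [smul_neg, neg_add]

lemma NE_one (hE : IsFrame q E) (x t : ℝ) (r : ℝ) :
    (E x t (r : ℂ))ᴴ * E x t (r : ℂ) = 1 := by
  have := hE.reality x t (r : ℂ)
  rwa [Complex.conj_ofReal] at this

lemma EN_one (hE : IsFrame q E) (x t : ℝ) (r : ℝ) :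
    E x t (r : ℂ) * (E x t (r : ℂ))ᴴ = 1 :=
  mul_eq_one_comm.mp (NE_one hE x t r)

lemma hd_Nx (hE : IsFrame q E) (r : ℝ) (x t : ℝ) :
    HasDerivAt (fun s => (E s t (r : ℂ))ᴴ)
      (-(Cm q x t (r : ℂ) * (E x t (r : ℂ))ᴴ)) x := by
  have h := ctL.hasFDerivAt.comp_hasDerivAt x (hd_x hE x t (r : ℂ))
  simp only [ctL_apply] at h
  rw [Matrix.conjTranspose_mul, ct_Cm] at h
  simpa [Matrix.neg_mul, Function.comp_def] using h

lemma hd_Nt (hE : IsFrame q E) (r : ℝ) (x t : ℝ) :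
    HasDerivAt (fun s => (E x s (r : ℂ))ᴴ)
      (-(Tm q x t (r : ℂ) * (E x t (r : ℂ))ᴴ)) t := by
  have h := ctL.hasFDerivAt.comp_hasDerivAt t (hd_t hE x t (r : ℂ))
  simp only [ctL_apply] at h
  rw [Matrix.conjTranspose_mul, ct_Tm] at h
  simpa [Matrix.neg_mul, Function.comp_def] using h

lemma skew (hE : IsFrame q E) (r : ℝ) (x t : ℝ) :
    (E x t (r : ℂ))ᴴ * DD E x t (r : ℂ) + (DD E x t (r : ℂ))ᴴ * E x t (r : ℂ) = 0 := by
  have hD := hd_lam hE x t (r : ℂ)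
  have hreal : HasDerivAt (fun s : ℝ => E x t (s : ℂ)) (DD E x t (r : ℂ)) r := by
    have h1 := (hD.hasFDerivAt.restrictScalars ℝ).comp_hasDerivAt r
      Complex.ofRealCLM.hasDerivAt
    simpa [Function.comp_def] using h1
  have hct : HasDerivAt (fun s : ℝ => (E x t (s : ℂ))ᴴ) ((DD E x t (r : ℂ))ᴴ) r := by
    have := ctL.hasFDerivAt.comp_hasDerivAt r hreal
    simpa [Function.comp_def] using this
  have hmul := hct.mmul hreal
  have hone : (fun s : ℝ => (E x t (s : ℂ))ᴴ * E x t (s : ℂ)) = fun _ => (1 : MM) :=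
    funext fun s => NE_one hE x t s
  have h0 : HasDerivAt (fun s : ℝ => (E x t (s : ℂ))ᴴ * E x t (s : ℂ)) 0 r := by
    rw [hone]; exact hasDerivAt_const _ _
  exact hmul.unique h0

lemma trace_zero (hE : IsFrame q E) (hdet : ∀ x t l, (E x t l).det = 1) (x t : ℝ) (l : ℂ) :
    (DD E x t l * (E x t l)⁻¹).trace = 0 := by
  have hD := hd_lam hE x t l
  have h00 : HasDerivAt (fun m => E x t m 0 0) (DD E x t l 0 0) l := by
    simpa [Function.comp_def] using (entryL 0 0).hasFDerivAt.comp_hasDerivAt l hD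
  have h01 : HasDerivAt (fun m => E x t m 0 1) (DD E x t l 0 1) l := by
    simpa [Function.comp_def] using (entryL 0 1).hasFDerivAt.comp_hasDerivAt l hD
  have h10 : HasDerivAt (fun m => E x t m 1 0) (DD E x t l 1 0) l := by
    simpa [Function.comp_def] using (entryL 1 0).hasFDerivAt.comp_hasDerivAt l hD
  have h11 : HasDerivAt (fun m => E x t m 1 1) (DD E x t l 1 1) l := by
    simpa [Function.comp_def] using (entryL 1 1).hasFDerivAt.comp_hasDerivAt l hD
  have hdet' := (h00.mul h11).sub (h01.mul h10)
  have hconst : (fun m => E x t m 0 0 * E x t m 1 1 - E x t m 0 1 * E x t m 1 0)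
      = fun _ => (1 : ℂ) := by
    funext m
    rw [← Matrix.det_fin_two]
    exact hdet x t m
  have hzero : HasDerivAt
      (fun m => E x t m 0 0 * E x t m 1 1 - E x t m 0 1 * E x t m 1 0) 0 l := by
    rw [hconst]; exact hasDerivAt_const _ _
  have h0 := hdet'.unique hzero
  have hiv : (E x t l)⁻¹ =
      !![E x t l 1 1, -(E x t l 0 1); -(E x t l 1 0), E x t l 0 0] := by
    rw [Matrix.inv_def, hdet x t l, Matrix.adjugate_fin_two]
    rw [Ring.inverse_one, one_smul]
  rw [hiv]
  simp [Matrix.trace_fin_two, Matrix.mul_apply, Fin.sum_univ_two]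
  linear_combination h0

lemma alpha_hd_x (hE : IsFrame q E) (r : ℝ) (x t : ℝ) :
    HasDerivAt (fun s => DD E s t (r : ℂ) * (E s t (r : ℂ))ᴴ)
      (E x t (r : ℂ) * Ma * (E x t (r : ℂ))ᴴ) x := by
  have h := (hd_Dx hE x t (r : ℂ)).mmul (hd_Nx hE r x t)
  convert h using 1
  noncomm_ring

lemma alpha_hd_t (hE : IsFrame q E) (r : ℝ) (x t : ℝ) :
    HasDerivAt (fun s => DD E x s (r : ℂ) * (E x s (r : ℂ))ᴴ)
      (E x t (r : ℂ) * ((2 * (r : ℂ)) • Ma + Mu (q x t)) * (E x t (r : ℂ))ᴴ) t := by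
  have h := (hd_Dt hE x t (r : ℂ)).mmul (hd_Nt hE r x t)
  convert h using 1
  noncomm_ring

lemma alpha_diff (hE : IsFrame q E) (r : ℝ) :
    Differentiable ℝ (fun p : ℝ × ℝ => DD E p.1 p.2 (r : ℂ) * (E p.1 p.2 (r : ℂ))ᴴ) := by
  have hF := hE.smooth
  have hF' : ContDiff ℝ (⊤ : ℕ∞) (fderiv ℝ (FF E)) := hF.fderiv_right (by simp)
  have hemb : ContDiff ℝ (⊤ : ℕ∞) (fun p : ℝ × ℝ => ((p.1, p.2, (r : ℂ)) : ℝ × ℝ × ℂ)) :=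
    contDiff_fst.prodMk (contDiff_snd.prodMk contDiff_const)
  have hD : ContDiff ℝ (⊤ : ℕ∞) (fun p : ℝ × ℝ => DD E p.1 p.2 (r : ℂ)) := by
    have h1 : ContDiff ℝ (⊤ : ℕ∞) (fun p : ℝ × ℝ =>
        fderiv ℝ (FF E) (p.1, p.2, (r : ℂ)) ((0:ℝ), (0:ℝ), (1:ℂ))) :=
      (ContinuousLinearMap.apply ℝ MM ((0:ℝ), (0:ℝ), (1:ℂ))).contDiff.comp (hF'.comp hemb)
    have h2 : (fun p : ℝ × ℝ => fderiv ℝ (FF E) (p.1, p.2, (r : ℂ)) ((0:ℝ), (0:ℝ), (1:ℂ)))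
        = fun p : ℝ × ℝ => DD E p.1 p.2 (r : ℂ) :=
      funext fun p => fderiv_e3 hE p.1 p.2 (r : ℂ)
    rwa [h2] at h1
  have hN : ContDiff ℝ (⊤ : ℕ∞) (fun p : ℝ × ℝ => (E p.1 p.2 (r : ℂ))ᴴ) := by
    have := ctL.contDiff.comp ((hE.smooth).comp hemb)
    simpa [Function.comp_def] using this
  intro p
  have hb := (mulRL.isBoundedBilinearMap.differentiableAt
      (DD E p.1 p.2 (r : ℂ), (E p.1 p.2 (r : ℂ))ᴴ)).comp p
    (((hD.differentiable (by simp)) p).prodMk ((hN.differentiable (by simp)) p))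
  simpa [Function.comp_def] using hb

end S6
open S6 in
/-- The one-parameter Pohlmeyer–Sym construction: for `l₀ ∈ ℝ`,
`γ(x,t) = ((∂E/∂λ)E⁻¹|_{λ=l₀})(x - 2l₀t, t)` is an su(2)-valued solution of the VFE
parametrized by arc length. -/
theorem statement6 (q : ℝ → ℝ → ℂ) (hq : IsSolNLS q)
    (E : ℝ → ℝ → ℂ → Matrix (Fin 2) (Fin 2) ℂ) (hE : IsFrame q E)
    (hdet : ∀ x t l, (E x t l).det = 1)
    (l₀ : ℝ)
    (α : ℝ → ℝ → Matrix (Fin 2) (Fin 2) ℂ)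
    (hα : ∀ x t, α x t = deriv (fun l => E x t l) (l₀ : ℂ) * (E x t (l₀ : ℂ))⁻¹)
    (γ : ℝ → ℝ → Matrix (Fin 2) (Fin 2) ℂ)
    (hγ : ∀ x t, γ x t = α (x - 2 * l₀ * t) t) :
    (∀ x t, IsSU2alg (α x t)) ∧
    (∀ x t, -(1/2 : ℂ) * (pdx γ x t * pdx γ x t).trace = 1) ∧
    (∀ x t, pdt γ x t =
      (1/4 : ℂ) • (pdx γ x t * pdx (pdx γ) x t - pdx (pdx γ) x t * pdx γ x t)) := by
  classical
  have hαDN : ∀ x t, α x t = DD E x t (l₀ : ℂ) * (E x t (l₀ : ℂ))ᴴ := by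
    intro x t
    rw [hα x t, Matrix.inv_eq_left_inv (NE_one hE x t l₀)]
    rfl
  -- partial derivatives of α
  have hax : ∀ x t, HasDerivAt (fun s => α s t)
      (E x t (l₀:ℂ) * Ma * (E x t (l₀:ℂ))ᴴ) x := by
    intro x t
    have h := alpha_hd_x hE l₀ x t
    have hfun : (fun s => α s t) = fun s => DD E s t (l₀:ℂ) * (E s t (l₀:ℂ))ᴴ :=
      funext fun s => hαDN s t
    rw [hfun]; exact h
  have hat : ∀ x t, HasDerivAt (fun s => α x s)
      (E x t (l₀:ℂ) * ((2*(l₀:ℂ)) • Ma + Mu (q x t)) * (E x t (l₀:ℂ))ᴴ) t := by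
    intro x t
    have h := alpha_hd_t hE l₀ x t
    have hfun : (fun s => α x s) = fun s => DD E x s (l₀:ℂ) * (E x s (l₀:ℂ))ᴴ :=
      funext fun s => hαDN x s
    rw [hfun]; exact h
  have hαjoint : ∀ p : ℝ × ℝ, DifferentiableAt ℝ (fun p : ℝ × ℝ => α p.1 p.2) p := by
    intro p
    have hfun : (fun p : ℝ × ℝ => α p.1 p.2)
        = fun p : ℝ × ℝ => DD E p.1 p.2 (l₀:ℂ) * (E p.1 p.2 (l₀:ℂ))ᴴ :=
      funext fun p => hαDN p.1 p.2
    rw [hfun]; exact alpha_diff hE l₀ p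
  have hfd1 : ∀ p : ℝ × ℝ, fderiv ℝ (fun p : ℝ × ℝ => α p.1 p.2) p ((1:ℝ),(0:ℝ))
      = E p.1 p.2 (l₀:ℂ) * Ma * (E p.1 p.2 (l₀:ℂ))ᴴ := by
    intro p
    have hline : HasDerivAt (fun s => α s p.2)
        (fderiv ℝ (fun p : ℝ × ℝ => α p.1 p.2) p ((1:ℝ),(0:ℝ))) p.1 :=
      (hαjoint p).hasFDerivAt.comp_hasDerivAt_of_eq p.1
        ((hasDerivAt_id p.1).prodMk (hasDerivAt_const p.1 p.2)) rfl
    exact hline.unique (hax p.1 p.2)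
  have hfd2 : ∀ p : ℝ × ℝ, fderiv ℝ (fun p : ℝ × ℝ => α p.1 p.2) p ((0:ℝ),(1:ℝ))
      = E p.1 p.2 (l₀:ℂ) * ((2*(l₀:ℂ)) • Ma + Mu (q p.1 p.2)) * (E p.1 p.2 (l₀:ℂ))ᴴ := by
    intro p
    have hline : HasDerivAt (fun s => α p.1 s)
        (fderiv ℝ (fun p : ℝ × ℝ => α p.1 p.2) p ((0:ℝ),(1:ℝ))) p.2 :=
      (hαjoint p).hasFDerivAt.comp_hasDerivAt_of_eq p.2
        ((hasDerivAt_const p.2 p.1).prodMk (hasDerivAt_id p.2)) rfl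
    exact hline.unique (hat p.1 p.2)
  -- γ_x
  have hγx : ∀ x t, pdx γ x t
      = E (x - 2*l₀*t) t (l₀:ℂ) * Ma * (E (x - 2*l₀*t) t (l₀:ℂ))ᴴ := by
    intro x t
    have hfun : (fun s => γ s t) = fun s => α (s - 2*l₀*t) t := funext fun s => hγ s t
    have hinner : HasDerivAt (fun s : ℝ => s - 2*l₀*t) 1 x := (hasDerivAt_id x).sub_const _
    have hcomp := (hax (x - 2*l₀*t) t).scomp x hinner
    have hpd : pdx γ x t = deriv (fun s => γ s t) x := rfl
    rw [hpd, hfun]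
    have hcd := hcomp.deriv
    simp only [Function.comp_def, one_smul] at hcd
    exact hcd
  -- γ_xx
  have hγxx : ∀ x t, pdx (pdx γ) x t
      = E (x - 2*l₀*t) t (l₀:ℂ) *
          (Cm q (x - 2*l₀*t) t (l₀:ℂ) * Ma - Ma * Cm q (x - 2*l₀*t) t (l₀:ℂ)) *
          (E (x - 2*l₀*t) t (l₀:ℂ))ᴴ := by
    intro x t
    have hBx : HasDerivAt (fun y => E y t (l₀:ℂ) * Ma * (E y t (l₀:ℂ))ᴴ)
        (E (x - 2*l₀*t) t (l₀:ℂ) *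
          (Cm q (x - 2*l₀*t) t (l₀:ℂ) * Ma - Ma * Cm q (x - 2*l₀*t) t (l₀:ℂ)) *
          (E (x - 2*l₀*t) t (l₀:ℂ))ᴴ) (x - 2*l₀*t) := by
      have h1 := (hd_x hE (x - 2*l₀*t) t (l₀:ℂ)).mmul (hasDerivAt_const (x - 2*l₀*t) Ma)
      have h2 := h1.mmul (hd_Nx hE l₀ (x - 2*l₀*t) t)
      convert h2 using 1
      · exact rfl
      noncomm_ring
    have hfun : (fun s => pdx γ s t)
        = fun s => (fun y => E y t (l₀:ℂ) * Ma * (E y t (l₀:ℂ))ᴴ) (s - 2*l₀*t) :=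
      funext fun s => hγx s t
    have hinner : HasDerivAt (fun s : ℝ => s - 2*l₀*t) 1 x := (hasDerivAt_id x).sub_const _
    have hcomp := hBx.scomp x hinner
    have hpd : pdx (pdx γ) x t = deriv (fun s => pdx γ s t) x := rfl
    rw [hpd, hfun]
    have hcd := hcomp.deriv
    simp only [Function.comp_def, one_smul] at hcd
    exact hcd
  -- γ_t
  have hγt : ∀ x t, pdt γ x t
      = E (x - 2*l₀*t) t (l₀:ℂ) * Mu (q (x - 2*l₀*t) t) * (E (x - 2*l₀*t) t (l₀:ℂ))ᴴ := by
    intro x t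
    have h1 : HasDerivAt (fun s : ℝ => x - 2*l₀*s) (-(2*l₀)) t := by
      simpa using ((hasDerivAt_id t).const_mul (2*l₀)).const_sub x
    have hinner : HasDerivAt (fun s : ℝ => ((x - 2*l₀*s, s) : ℝ × ℝ)) ((-(2*l₀), 1) : ℝ × ℝ) t :=
      h1.prodMk (hasDerivAt_id t)
    have hcomp := HasFDerivAt.comp_hasDerivAt_of_eq (l := fun p : ℝ × ℝ => α p.1 p.2)
      (f := fun s : ℝ => ((x - 2*l₀*s, s) : ℝ × ℝ)) t
      (hαjoint (x - 2*l₀*t, t)).hasFDerivAt hinner rfl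
    have hval : fderiv ℝ (fun p : ℝ × ℝ => α p.1 p.2) (x - 2*l₀*t, t) ((-(2*l₀), 1) : ℝ × ℝ)
        = E (x - 2*l₀*t) t (l₀:ℂ) * Mu (q (x - 2*l₀*t) t) * (E (x - 2*l₀*t) t (l₀:ℂ))ᴴ := by
      have hdec : ((-(2*l₀), 1) : ℝ × ℝ) = (-(2*l₀)) • ((1,0) : ℝ × ℝ) + ((0,1) : ℝ × ℝ) := by
        simp [Prod.ext_iff]
      rw [hdec, map_add,
        (fderiv ℝ (fun p : ℝ × ℝ => α p.1 p.2) (x - 2*l₀*t, t)).map_smul, hfd1, hfd2]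
      rw [real_smul_mat]
      push_cast
      rw [Matrix.mul_add, Matrix.add_mul, mul_smul_comm, smul_mul_assoc, neg_smul,
        neg_add_cancel_left]
    replace hcomp := hcomp.congr_deriv hval
    have hpd : pdt γ x t = deriv (fun s => γ x s) t := rfl
    rw [hpd]
    have hfun : (fun s : ℝ => γ x s)
        = fun s : ℝ => (fun p : ℝ × ℝ => α p.1 p.2) (x - 2*l₀*s, s) :=
      funext fun s => hγ x s
    rw [hfun]
    have hcd := hcomp.deriv
    simp only [Function.comp_def] at hcd
    exact hcd
  refine ⟨?_, ?_, ?_⟩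
  · -- α takes values in su(2)
    intro x t
    have hNE := NE_one hE x t l₀
    have hEN := EN_one hE x t l₀
    have hsk := skew hE l₀ x t
    constructor
    · rw [hαDN x t]
      have hDc : (DD E x t (l₀:ℂ))ᴴ * E x t (l₀:ℂ)
          = -((E x t (l₀:ℂ))ᴴ * DD E x t (l₀:ℂ)) := by
        rw [add_comm] at hsk
        exact eq_neg_of_add_eq_zero_left hsk
      calc (DD E x t (l₀:ℂ) * (E x t (l₀:ℂ))ᴴ)ᴴ
          = E x t (l₀:ℂ) * (DD E x t (l₀:ℂ))ᴴ := by
            rw [Matrix.conjTranspose_mul, Matrix.conjTranspose_conjTranspose]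
        _ = E x t (l₀:ℂ) * (DD E x t (l₀:ℂ))ᴴ * (E x t (l₀:ℂ) * (E x t (l₀:ℂ))ᴴ) := by
            rw [hEN, Matrix.mul_one]
        _ = E x t (l₀:ℂ) * ((DD E x t (l₀:ℂ))ᴴ * E x t (l₀:ℂ)) * (E x t (l₀:ℂ))ᴴ := by
            noncomm_ring
        _ = E x t (l₀:ℂ) * (-((E x t (l₀:ℂ))ᴴ * DD E x t (l₀:ℂ))) * (E x t (l₀:ℂ))ᴴ := by
            rw [hDc]
        _ = -((E x t (l₀:ℂ) * (E x t (l₀:ℂ))ᴴ) * (DD E x t (l₀:ℂ) * (E x t (l₀:ℂ))ᴴ)) := by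
            noncomm_ring
        _ = -(DD E x t (l₀:ℂ) * (E x t (l₀:ℂ))ᴴ) := by
            rw [hEN, Matrix.one_mul]
    · rw [hαDN x t, ← Matrix.inv_eq_left_inv (NE_one hE x t l₀)]
      exact trace_zero hE hdet x t (l₀:ℂ)
  · -- arc length
    intro x t
    rw [hγx x t]
    have hNE := NE_one hE (x - 2*l₀*t) t l₀
    have hEN := EN_one hE (x - 2*l₀*t) t l₀
    have key : ∀ X Y : MM,
        (E (x - 2*l₀*t) t (l₀:ℂ) * X * (E (x - 2*l₀*t) t (l₀:ℂ))ᴴ) *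
          (E (x - 2*l₀*t) t (l₀:ℂ) * Y * (E (x - 2*l₀*t) t (l₀:ℂ))ᴴ)
        = E (x - 2*l₀*t) t (l₀:ℂ) * (X * Y) * (E (x - 2*l₀*t) t (l₀:ℂ))ᴴ := by
      intro X Y
      have h1 : (E (x - 2*l₀*t) t (l₀:ℂ) * X * (E (x - 2*l₀*t) t (l₀:ℂ))ᴴ) *
          (E (x - 2*l₀*t) t (l₀:ℂ) * Y * (E (x - 2*l₀*t) t (l₀:ℂ))ᴴ)
          = E (x - 2*l₀*t) t (l₀:ℂ) * X *
              ((E (x - 2*l₀*t) t (l₀:ℂ))ᴴ * E (x - 2*l₀*t) t (l₀:ℂ)) *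
              (Y * (E (x - 2*l₀*t) t (l₀:ℂ))ᴴ) := by noncomm_ring
      rw [h1, hNE, Matrix.mul_one]
      noncomm_ring
    rw [key Ma Ma, Ma_sq]
    have hm1 : E (x - 2*l₀*t) t (l₀:ℂ) * (-1 : MM) * (E (x - 2*l₀*t) t (l₀:ℂ))ᴴ = -1 := by
      rw [Matrix.mul_neg, Matrix.mul_one, Matrix.neg_mul, hEN]
    rw [hm1]
    norm_num [Matrix.trace_neg, Matrix.trace_one]
  · -- VFE
    intro x t
    rw [hγt x t, hγx x t, hγxx x t]
    have hNE := NE_one hE (x - 2*l₀*t) t l₀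
    have key : ∀ X Y : MM,
        (E (x - 2*l₀*t) t (l₀:ℂ) * X * (E (x - 2*l₀*t) t (l₀:ℂ))ᴴ) *
          (E (x - 2*l₀*t) t (l₀:ℂ) * Y * (E (x - 2*l₀*t) t (l₀:ℂ))ᴴ)
        = E (x - 2*l₀*t) t (l₀:ℂ) * (X * Y) * (E (x - 2*l₀*t) t (l₀:ℂ))ᴴ := by
      intro X Y
      have h1 : (E (x - 2*l₀*t) t (l₀:ℂ) * X * (E (x - 2*l₀*t) t (l₀:ℂ))ᴴ) *
          (E (x - 2*l₀*t) t (l₀:ℂ) * Y * (E (x - 2*l₀*t) t (l₀:ℂ))ᴴ)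
          = E (x - 2*l₀*t) t (l₀:ℂ) * X *
              ((E (x - 2*l₀*t) t (l₀:ℂ))ᴴ * E (x - 2*l₀*t) t (l₀:ℂ)) *
              (Y * (E (x - 2*l₀*t) t (l₀:ℂ))ᴴ) := by noncomm_ring
      rw [h1, hNE, Matrix.mul_one]
      noncomm_ring
    rw [key, key]
    have hsub : E (x - 2*l₀*t) t (l₀:ℂ) *
          (Ma * (Cm q (x - 2*l₀*t) t (l₀:ℂ) * Ma - Ma * Cm q (x - 2*l₀*t) t (l₀:ℂ))) *
          (E (x - 2*l₀*t) t (l₀:ℂ))ᴴ -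
        E (x - 2*l₀*t) t (l₀:ℂ) *
          ((Cm q (x - 2*l₀*t) t (l₀:ℂ) * Ma - Ma * Cm q (x - 2*l₀*t) t (l₀:ℂ)) * Ma) *
          (E (x - 2*l₀*t) t (l₀:ℂ))ᴴ
        = E (x - 2*l₀*t) t (l₀:ℂ) *
            (Ma * (Cm q (x - 2*l₀*t) t (l₀:ℂ) * Ma - Ma * Cm q (x - 2*l₀*t) t (l₀:ℂ)) -
              (Cm q (x - 2*l₀*t) t (l₀:ℂ) * Ma - Ma * Cm q (x - 2*l₀*t) t (l₀:ℂ)) * Ma) *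
            (E (x - 2*l₀*t) t (l₀:ℂ))ᴴ := by noncomm_ring
    rw [hsub]
    have h4 : Ma * (Cm q (x - 2*l₀*t) t (l₀:ℂ) * Ma - Ma * Cm q (x - 2*l₀*t) t (l₀:ℂ)) -
          (Cm q (x - 2*l₀*t) t (l₀:ℂ) * Ma - Ma * Cm q (x - 2*l₀*t) t (l₀:ℂ)) * Ma
        = (4:ℂ) • Mu (q (x - 2*l₀*t) t) := by
      simp only [Cm]
      exact key4 (l₀:ℂ) (q (x - 2*l₀*t) t)
    rw [h4, mul_smul_comm, smul_mul_assoc, smul_smul]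
    norm_num
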